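/- On a complete graph, for any finitely supported f and T > 0, the function x ↦ max_{t∈[0,T]} Γ(P_t f)(x) belongs to ℓ¹(V,m), with ‖max_{[0,T]} Γ(P_t f)‖_{ℓ¹_m} ≤ ‖Γ(f)‖_{ℓ¹_m} + C T ‖Δf‖_{ℓ²_m}(‖f‖_{ℓ²_m} + ‖Δ²f‖_{ℓ²_m}). -/

import Mathlib

open scoped BigOperators
open Filter

/-- The carré du champ operator. -/
noncomputable def gam {V : Type*} (m : V → ℝ) (μ : V → V → ℝ) (f g : V → ℝ) (x : V) : ℝ :=
  (1 / (2 * m x)) * ∑' y, μ x y * (f y - f x) * (g y - g x)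

/-- The formal graph Laplacian. -/
noncomputable def lap {V : Type*} (m : V → ℝ) (μ : V → V → ℝ) (f : V → ℝ) (x : V) : ℝ :=
  (1 / m x) * ∑' y, μ x y * (f y - f x)

/-- The Dirichlet energy `Q(f) = (1/2) ∑_{x,y} μ_{xy} (f y - f x)²`. -/
noncomputable def QN {V : Type*} (μ : V → V → ℝ) (f : V → ℝ) : ℝ :=
  (1 / 2) * ∑' p : V × V, μ p.1 p.2 * (f p.2 - f p.1) ^ 2

/-- The `ℓ²(V,m)` norm. -/
noncomputable def l2n {V : Type*} (m : V → ℝ) (f : V → ℝ) : ℝ :=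
  Real.sqrt (∑' x, f x ^ 2 * m x)

/-- The iterated carré du champ `Γ₂(f) = (1/2) Δ Γ(f) - Γ(f, Δ f)`. -/
noncomputable def gam2 {V : Type*} (m : V → ℝ) (μ : V → V → ℝ) (f : V → ℝ) (x : V) : ℝ :=
  (1 / 2) * lap m μ (fun y => gam m μ f f y) x - gam m μ f (lap m μ f) x

/-!
Along the heat flow `u_t = P_t f`, the product rule for the bilinear form `Γ` gives
`∂ₜ Γ(u_t) = 2 Γ(P_t f, P_t Δf) ≤ Γ(P_t f) + Γ(P_t Δf)`, so pointwise
`max_{[0,T]} Γ(P_t f) ≤ Γ(f) + ∫₀ᵀ (Γ(P_s f) + Γ(P_s Δf)) ds`.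
Summing over `V` reduces the claim to the energy estimate, once `∑ₓ Γ(u)(x) m(x) = Q(u)` is
known for `u, Δu ∈ ℓ²(V,m)`. This is where completeness enters: the Caccioppoli inequality
`∑ ζ² Γ(u) m ≤ ∑ ((1 + 4ε) u² + (Δu)²) m` for cut-offs with `Γ(ζ) ≤ ε`, applied to
`ζ = max η_k 0 → 1`, bounds the partial sums of `Γ(u) m` uniformly.
-/

theorem sum_intervalIntegral_le {ι : Type*} {ψ : ι → ℝ → ℝ} {T K : ℝ} (hT : 0 ≤ T)
    (hψ : ∀ i, Continuous (ψ i)) {F : Finset ι} (hK : ∀ s ∈ Set.Icc 0 T, ∑ i ∈ F, ψ i s ≤ K) :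
    ∑ i ∈ F, ∫ s in 0..T, ψ i s ≤ T * K := by
  rw [← intervalIntegral.integral_finsetSum fun i _ =>
    (hψ i).intervalIntegrable (μ := MeasureTheory.volume) 0 T]
  calc ∫ s in 0..T, ∑ i ∈ F, ψ i s ≤ ∫ _ in 0..T, K :=
        intervalIntegral.integral_mono_on hT
          ((continuous_finsetSum F fun i _ => hψ i).intervalIntegrable 0 T)
          intervalIntegrable_const hK
    _ = T * K := by simp

theorem summable_of_le_add {ι : Type*} {a b c : ι → ℝ} {K : ℝ} (ha : ∀ i, 0 ≤ a i)
    (hc : ∀ i, 0 ≤ c i) (habc : ∀ i, a i ≤ b i + c i) (hb : Summable b)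
    (hK : ∀ F : Finset ι, ∑ i ∈ F, c i ≤ K) :
    Summable a ∧ ∑' i, a i ≤ ∑' i, b i + K := by
  have hcs : Summable c := summable_of_sum_le hc hK
  have has : Summable a := (hb.add hcs).of_nonneg_of_le ha habc
  refine ⟨has, ?_⟩
  calc ∑' i, a i ≤ ∑' i, (b i + c i) := has.tsum_le_tsum habc (hb.add hcs)
    _ = ∑' i, b i + ∑' i, c i := hb.tsum_add hcs
    _ ≤ ∑' i, b i + K := add_le_add_right (hcs.tsum_le_of_sum_le hK) _

namespace WeightedGraph

open Finset Function

variable {V : Type*} {m : V → ℝ} {μ : V → V → ℝ} {x : V}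

theorem tsum_mul_eq_sum {N : Finset V} (hN : ∀ y, μ x y ≠ 0 → y ∈ N) (F : V → ℝ) :
    ∑' y, μ x y * F y = ∑ y ∈ N, μ x y * F y :=
  tsum_eq_sum fun y hy => by rw [not_not.1 (mt (hN y) hy), zero_mul]

theorem gam_eq_sum {N : Finset V} (hN : ∀ y, μ x y ≠ 0 → y ∈ N) (u v : V → ℝ) :
    gam m μ u v x = 1 / (2 * m x) * ∑ y ∈ N, μ x y * ((u y - u x) * (v y - v x)) := by
  simp only [gam, mul_assoc, tsum_mul_eq_sum hN]

theorem two_mul_gam_mul_eq_sum (hmx : m x ≠ 0) {N : Finset V} (hN : ∀ y, μ x y ≠ 0 → y ∈ N)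
    (u v : V → ℝ) :
    2 * (gam m μ u v x * m x) = ∑ y ∈ N, μ x y * ((u y - u x) * (v y - v x)) := by
  rw [gam_eq_sum hN]
  field_simp

theorem lap_mul_eq_sum (hmx : m x ≠ 0) {N : Finset V} (hN : ∀ y, μ x y ≠ 0 → y ∈ N)
    (u : V → ℝ) : lap m μ u x * m x = ∑ y ∈ N, μ x y * (u y - u x) := by
  rw [lap, tsum_mul_eq_sum hN]
  field_simp

theorem gam_comm (u v : V → ℝ) : gam m μ u v x = gam m μ v u x := by
  simp only [gam, mul_right_comm (μ x _) (u _ - u x)]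

theorem gam_self_nonneg (hmx : 0 ≤ m x) (hnn : ∀ x y, 0 ≤ μ x y) (u : V → ℝ) :
    0 ≤ gam m μ u u x :=
  mul_nonneg (by positivity) (tsum_nonneg fun y => by
    rw [mul_assoc]; exact mul_nonneg (hnn x y) (mul_self_nonneg _))

theorem gam_self_mul_nonneg (hmx : 0 ≤ m x) (hnn : ∀ x y, 0 ≤ μ x y) (u : V → ℝ) :
    0 ≤ gam m μ u u x * m x :=
  mul_nonneg (gam_self_nonneg hmx hnn u) hmx

theorem two_mul_gam_le (hmx : 0 ≤ m x) (hnn : ∀ x y, 0 ≤ μ x y)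
    (hlf : ∀ x, (support (μ x)).Finite) (u v : V → ℝ) :
    2 * gam m μ u v x ≤ gam m μ u u x + gam m μ v v x := by
  have hN : ∀ y, μ x y ≠ 0 → y ∈ (hlf x).toFinset := fun y => (hlf x).mem_toFinset.2
  rw [gam_eq_sum hN, gam_eq_sum hN, gam_eq_sum hN, mul_left_comm, ← mul_add]
  refine mul_le_mul_of_nonneg_left ?_ (by positivity)
  rw [mul_sum, ← sum_add_distrib]
  gcongr with y
  nlinarith [mul_nonneg (hnn x y) (sq_nonneg (u y - u x - (v y - v x)))]

theorem gam_max_zero_le (hmx : 0 ≤ m x) (hnn : ∀ x y, 0 ≤ μ x y)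
    (hlf : ∀ x, (support (μ x)).Finite) (η : V → ℝ) :
    gam m μ (fun y => max (η y) 0) (fun y => max (η y) 0) x ≤ gam m μ η η x := by
  have hN : ∀ y, μ x y ≠ 0 → y ∈ (hlf x).toFinset := fun y => (hlf x).mem_toFinset.2
  rw [gam_eq_sum hN, gam_eq_sum hN]
  refine mul_le_mul_of_nonneg_left (sum_le_sum fun y _ => ?_) (by positivity)
  refine mul_le_mul_of_nonneg_left ?_ (hnn x y)
  rw [← abs_mul_abs_self, ← abs_mul_abs_self (η y - η x)]
  exact mul_self_le_mul_self (abs_nonneg _) (abs_max_sub_max_le_abs _ _ _)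

theorem sum_mul_sq_le_two_mul_gam (hmx : m x ≠ 0) (hnn : ∀ x y, 0 ≤ μ x y)
    (hlf : ∀ x, (support (μ x)).Finite) (v : V → ℝ) (N : Finset V) :
    ∑ y ∈ N, μ x y * (v y - v x) ^ 2 ≤ 2 * (gam m μ v v x * m x) := by
  classical
  rw [two_mul_gam_mul_eq_sum hmx (N := N ∪ (hlf x).toFinset)
    fun y hy => mem_union_right _ ((hlf x).mem_toFinset.2 hy)]
  simp only [← sq]
  exact sum_le_sum_of_subset_of_nonneg subset_union_left
    fun y _ _ => mul_nonneg (hnn x y) (sq_nonneg _)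

theorem exists_finset_nbhd (hlf : ∀ x, (support (μ x)).Finite) (s : Finset V) :
    ∃ N : Finset V, s ⊆ N ∧ ∀ x ∈ s, ∀ y, μ x y ≠ 0 → y ∈ N := by
  classical
  exact ⟨s ∪ s.biUnion fun x => (hlf x).toFinset, subset_union_left, fun x hx y hy =>
    mem_union_right _ (mem_biUnion.2 ⟨x, hx, (hlf x).mem_toFinset.2 hy⟩)⟩

theorem support_lap_finite (hsym : ∀ x y, μ x y = μ y x) (hlf : ∀ x, (support (μ x)).Finite)
    {f : V → ℝ} (hf : (support f).Finite) : (support (lap m μ f)).Finite := by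
  refine (hf.union (hf.biUnion fun y _ => hlf y)).subset fun x hx => ?_
  by_contra hx'
  simp only [Set.mem_union, mem_support, Set.mem_iUnion, not_or, not_exists, not_not] at hx'
  refine hx ?_
  rw [lap, tsum_congr fun y => ?_, tsum_zero, mul_zero]
  by_cases hy : f y = 0
  · rw [hy, hx'.1, sub_self, mul_zero]
  · rw [hsym, hx'.2 y hy, zero_mul]

theorem summable_sq_mul {f : V → ℝ} (hf : (support f).Finite) :
    Summable fun x => f x ^ 2 * m x :=
  summable_of_hasFiniteSupport <| hf.subset fun x hx => by
    simp only [mem_support] at hx ⊢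
    intro h
    simp [h] at hx

theorem sum_sum_mul_swap (hsym : ∀ x y, μ x y = μ y x) (N : Finset V) (F : V → V → ℝ) :
    ∑ x ∈ N, ∑ y ∈ N, μ x y * F x y = ∑ x ∈ N, ∑ y ∈ N, μ x y * F y x := by
  rw [sum_comm]
  simp only [hsym]

theorem sum_sum_mul_sub_mul_sub (hsym : ∀ x y, μ x y = μ y x) (N : Finset V) (u g : V → ℝ) :
    ∑ x ∈ N, ∑ y ∈ N, μ x y * ((u y - u x) * (g y - g x)) =
      -2 * ∑ x ∈ N, g x * ∑ y ∈ N, μ x y * (u y - u x) := by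
  have hswap := sum_sum_mul_swap hsym N fun x y => (u y - u x) * g y
  calc ∑ x ∈ N, ∑ y ∈ N, μ x y * ((u y - u x) * (g y - g x))
      = ∑ x ∈ N, ∑ y ∈ N, μ x y * ((u y - u x) * g y) -
          ∑ x ∈ N, ∑ y ∈ N, μ x y * ((u y - u x) * g x) := by
        simp only [← sum_sub_distrib, mul_sub]
    _ = -2 * ∑ x ∈ N, g x * ∑ y ∈ N, μ x y * (u y - u x) := by
        simp only [hswap, ← sum_sub_distrib, mul_sum]
        exact sum_congr rfl fun x _ => sum_congr rfl fun y _ => by ring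

theorem sum_sum_mul_sq_sub_mul_sq_le (hm : ∀ x, 0 < m x) (hnn : ∀ x y, 0 ≤ μ x y)
    (hlf : ∀ x, (support (μ x)).Finite) (u ζ : V → ℝ) {ε : ℝ} (hζ : ∀ x, gam m μ ζ ζ x ≤ ε)
    (N : Finset V) :
    ∑ x ∈ N, ∑ y ∈ N, μ x y * ((ζ y - ζ x) ^ 2 * u x ^ 2) ≤ 2 * ε * ∑ x ∈ N, u x ^ 2 * m x := by
  rw [mul_sum]
  refine sum_le_sum fun x _ => ?_
  calc ∑ y ∈ N, μ x y * ((ζ y - ζ x) ^ 2 * u x ^ 2)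
      = u x ^ 2 * ∑ y ∈ N, μ x y * (ζ y - ζ x) ^ 2 := by
        rw [mul_sum]
        exact sum_congr rfl fun y _ => by ring
    _ ≤ u x ^ 2 * (2 * (gam m μ ζ ζ x * m x)) :=
        mul_le_mul_of_nonneg_left (sum_mul_sq_le_two_mul_gam (hm x).ne' hnn hlf ζ N)
          (sq_nonneg _)
    _ ≤ 2 * ε * (u x ^ 2 * m x) := by
        have := mul_le_mul_of_nonneg_right (hζ x) (hm x).le
        nlinarith [sq_nonneg (u x)]

theorem sq_mul_sub_sq_le (a b p q : ℝ) :
    a ^ 2 * (q - p) ^ 2 ≤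
      2 * ((q - p) * (b ^ 2 * q - a ^ 2 * p)) + (b - a) ^ 2 * (p ^ 2 + 3 * q ^ 2) := by
  nlinarith [sq_nonneg (b * q - a * p + q * (b - a)), sq_nonneg ((b - a) * (p - q))]

/-- Caccioppoli inequality: Green's formula on `N` with the test function `ζ²u`, estimated edge by
edge with `sq_mul_sub_sq_le`. -/
theorem sum_sq_mul_gam_mul_le (hm : ∀ x, 0 < m x) (hsym : ∀ x y, μ x y = μ y x)
    (hnn : ∀ x y, 0 ≤ μ x y) (hlf : ∀ x, (support (μ x)).Finite) (u ζ : V → ℝ) {ε : ℝ}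
    (hζ1 : ∀ x, ζ x ^ 2 ≤ 1) (hζ : ∀ x, gam m μ ζ ζ x ≤ ε) (N : Finset V)
    (hN : ∀ x, ζ x ≠ 0 → x ∈ N ∧ ∀ y, μ x y ≠ 0 → y ∈ N) :
    ∑ x ∈ N, ζ x ^ 2 * gam m μ u u x * m x ≤
      ∑ x ∈ N, ((1 + 4 * ε) * u x ^ 2 + lap m μ u x ^ 2) * m x := by
  have hA : ∑ x ∈ N, ∑ y ∈ N, μ x y * (ζ x ^ 2 * (u y - u x) ^ 2) =
      2 * ∑ x ∈ N, ζ x ^ 2 * gam m μ u u x * m x := by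
    rw [mul_sum]
    refine sum_congr rfl fun x _ => ?_
    by_cases hx : ζ x = 0
    · simp [hx]
    rw [mul_assoc, mul_left_comm, two_mul_gam_mul_eq_sum (hm x).ne' (hN x hx).2, mul_sum]
    exact sum_congr rfl fun y _ => by ring
  have hG : ∑ x ∈ N, ∑ y ∈ N, μ x y * ((u y - u x) * (ζ y ^ 2 * u y - ζ x ^ 2 * u x)) =
      -2 * ∑ x ∈ N, ζ x ^ 2 * u x * lap m μ u x * m x := by
    rw [sum_sum_mul_sub_mul_sub hsym N u fun x => ζ x ^ 2 * u x]
    congr 1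
    refine sum_congr rfl fun x _ => ?_
    by_cases hx : ζ x = 0
    · simp [hx]
    rw [mul_assoc _ (lap m μ u x), lap_mul_eq_sum (hm x).ne' (hN x hx).2]
  have hW : ∑ x ∈ N, ∑ y ∈ N, μ x y * ((ζ y - ζ x) ^ 2 * (u x ^ 2 + 3 * u y ^ 2)) =
      4 * ∑ x ∈ N, ∑ y ∈ N, μ x y * ((ζ y - ζ x) ^ 2 * u x ^ 2) := by
    have hswap := sum_sum_mul_swap hsym N fun x y => (ζ y - ζ x) ^ 2 * u y ^ 2
    simp only [mul_add, sum_add_distrib, mul_left_comm _ (3 : ℝ), ← mul_sum, hswap]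
    simp only [mul_sum, ← sum_add_distrib]
    exact sum_congr rfl fun x _ => sum_congr rfl fun y _ => by ring
  have hedges : ∑ x ∈ N, ∑ y ∈ N, μ x y * (ζ x ^ 2 * (u y - u x) ^ 2) ≤
      2 * ∑ x ∈ N, ∑ y ∈ N, μ x y * ((u y - u x) * (ζ y ^ 2 * u y - ζ x ^ 2 * u x)) +
        ∑ x ∈ N, ∑ y ∈ N, μ x y * ((ζ y - ζ x) ^ 2 * (u x ^ 2 + 3 * u y ^ 2)) := by
    simp only [mul_sum, ← sum_add_distrib]
    exact sum_le_sum fun x _ => sum_le_sum fun y _ => by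
      linear_combination mul_le_mul_of_nonneg_left (sq_mul_sub_sq_le (ζ x) (ζ y) (u x) (u y))
        (hnn x y)
  have hlap : -2 * ∑ x ∈ N, ζ x ^ 2 * u x * lap m μ u x * m x ≤
      ∑ x ∈ N, (u x ^ 2 + lap m μ u x ^ 2) * m x := by
    rw [mul_sum]
    refine sum_le_sum fun x _ => ?_
    rw [show -2 * (ζ x ^ 2 * u x * lap m μ u x * m x) =
      -2 * ζ x ^ 2 * u x * lap m μ u x * m x by ring]
    refine mul_le_mul_of_nonneg_right ?_ (hm x).le
    nlinarith [mul_nonneg (sub_nonneg.2 (hζ1 x))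
      (add_nonneg (sq_nonneg (u x)) (sq_nonneg (lap m μ u x))),
      mul_nonneg (sq_nonneg (ζ x)) (sq_nonneg (u x + lap m μ u x))]
  have hsplit : ∑ x ∈ N, ((1 + 4 * ε) * u x ^ 2 + lap m μ u x ^ 2) * m x =
      ∑ x ∈ N, (u x ^ 2 + lap m μ u x ^ 2) * m x + 4 * ε * ∑ x ∈ N, u x ^ 2 * m x := by
    rw [mul_sum, ← sum_add_distrib]
    exact sum_congr rfl fun x _ => by ring
  linarith [sum_sum_mul_sq_sub_mul_sq_le hm hnn hlf u ζ hζ N]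

theorem sum_max_sq_mul_gam_mul_le (hm : ∀ x, 0 < m x) (hsym : ∀ x y, μ x y = μ y x)
    (hnn : ∀ x y, 0 ≤ μ x y) (hlf : ∀ x, (support (μ x)).Finite) {η : V → ℝ}
    (hηfin : (support η).Finite) (hη1 : ∀ x, η x ≤ 1) (hηgam : ∀ x, gam m μ η η x ≤ 1)
    {u : V → ℝ} (hu : Summable fun x => u x ^ 2 * m x)
    (hΔu : Summable fun x => lap m μ u x ^ 2 * m x) (F : Finset V) :
    ∑ x ∈ F, max (η x) 0 ^ 2 * gam m μ u u x * m x ≤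
      ∑' x, (5 * u x ^ 2 + lap m μ u x ^ 2) * m x := by
  classical
  obtain ⟨N, hsN, hN⟩ := exists_finset_nbhd hlf (F ∪ hηfin.toFinset)
  have hζN : ∀ x, max (η x) 0 ≠ 0 → x ∈ N ∧ ∀ y, μ x y ≠ 0 → y ∈ N := fun x hx => by
    have hx' : x ∈ F ∪ hηfin.toFinset :=
      mem_union_right _ (hηfin.mem_toFinset.2 fun h => hx (by simp [h]))
    exact ⟨hsN hx', hN x hx'⟩
  have hζ1 : ∀ x, max (η x) 0 ^ 2 ≤ 1 := fun x =>
    pow_le_one₀ (le_max_right _ _) (max_le (hη1 x) zero_le_one)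
  have hζ : ∀ x, gam m μ (fun y => max (η y) 0) (fun y => max (η y) 0) x ≤ 1 := fun x =>
    (gam_max_zero_le (hm x).le hnn hlf η).trans (hηgam x)
  have hB : Summable fun x => (5 * u x ^ 2 + lap m μ u x ^ 2) * m x :=
    ((hu.mul_left 5).add hΔu).congr fun x => by ring
  calc ∑ x ∈ F, max (η x) 0 ^ 2 * gam m μ u u x * m x
      ≤ ∑ x ∈ N, max (η x) 0 ^ 2 * gam m μ u u x * m x :=
        sum_le_sum_of_subset_of_nonneg (subset_union_left.trans hsN) fun x _ _ => by
          rw [mul_assoc]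
          exact mul_nonneg (sq_nonneg _) (gam_self_mul_nonneg (hm x).le hnn u)
    _ ≤ ∑ x ∈ N, (5 * u x ^ 2 + lap m μ u x ^ 2) * m x :=
        (sum_sq_mul_gam_mul_le hm hsym hnn hlf u _ hζ1 hζ N hζN).trans_eq (by norm_num)
    _ ≤ _ := hB.sum_le_tsum _ fun x _ => by have := hm x; positivity

theorem summable_gam_mul (hm : ∀ x, 0 < m x) (hsym : ∀ x y, μ x y = μ y x)
    (hnn : ∀ x y, 0 ≤ μ x y) (hlf : ∀ x, (support (μ x)).Finite) {η : ℕ → V → ℝ}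
    (hηfin : ∀ k, (support (η k)).Finite) (hηmono : ∀ k x, η k x ≤ η (k + 1) x)
    (hηlim : ∀ x, Tendsto (fun k => η k x) atTop (nhds 1))
    (hηgam : ∀ k x, 1 ≤ k → gam m μ (η k) (η k) x ≤ 1 / (k : ℝ)) {u : V → ℝ}
    (hu : Summable fun x => u x ^ 2 * m x) (hΔu : Summable fun x => lap m μ u x ^ 2 * m x) :
    Summable fun x => gam m μ u u x * m x := by
  refine summable_of_sum_le (c := ∑' x, (5 * u x ^ 2 + lap m μ u x ^ 2) * m x)
    (fun x => gam_self_mul_nonneg (hm x).le hnn u) fun F => ?_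
  have hη1 : ∀ k x, η k x ≤ 1 := fun k x =>
    (monotone_nat_of_le_succ fun j => hηmono j x).ge_of_tendsto (hηlim x) k
  have hlim : Tendsto (fun k => ∑ x ∈ F, max (η k x) 0 ^ 2 * gam m μ u u x * m x) atTop
      (nhds (∑ x ∈ F, gam m μ u u x * m x)) := by
    refine tendsto_finsetSum F fun x _ => ?_
    simpa using ((((hηlim x).max (tendsto_const_nhds (x := 0))).pow 2).mul_const
      (gam m μ u u x)).mul_const (m x)
  refine le_of_tendsto hlim (eventually_atTop.2 ⟨1, fun k hk => ?_⟩)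
  exact sum_max_sq_mul_gam_mul_le hm hsym hnn hlf (hηfin k) (hη1 k) (fun x => (hηgam k x hk).trans
    (div_le_one_of_le₀ (by exact_mod_cast hk) (by positivity))) hu hΔu F

theorem tsum_gam_mul_eq_QN (hm : ∀ x, 0 < m x) (hnn : ∀ x y, 0 ≤ μ x y)
    (hlf : ∀ x, (support (μ x)).Finite) {u : V → ℝ}
    (hu : Summable fun x => gam m μ u u x * m x) :
    ∑' x, gam m μ u u x * m x = QN μ u := by
  have hN : ∀ x y, μ x y ≠ 0 → y ∈ (hlf x).toFinset := fun x y => (hlf x).mem_toFinset.2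
  have hfiber : ∀ x, ∑' y, μ x y * (u y - u x) ^ 2 = 2 * (gam m μ u u x * m x) := fun x => by
    rw [tsum_mul_eq_sum (hN x), two_mul_gam_mul_eq_sum (hm x).ne' (hN x)]
    simp only [sq]
  have hpair : Summable fun p : V × V => μ p.1 p.2 * (u p.2 - u p.1) ^ 2 := by
    refine (summable_prod_of_nonneg fun p => mul_nonneg (hnn _ _) (sq_nonneg _)).2
      ⟨fun x => summable_of_hasFiniteSupport <| (hlf x).subset <|
        support_mul_subset_left _ _, ?_⟩
    simpa only [hfiber] using hu.mul_left 2
  rw [QN, hpair.tsum_prod, tsum_congr hfiber, tsum_mul_left]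
  ring

theorem hasDerivAt_gam (hlf : ∀ x, (support (μ x)).Finite) {a b : ℝ → V → ℝ} {a' b' : V → ℝ}
    {t : ℝ} (ha : ∀ y, HasDerivAt (fun s => a s y) (a' y) t)
    (hb : ∀ y, HasDerivAt (fun s => b s y) (b' y) t) (x : V) :
    HasDerivAt (fun s => gam m μ (a s) (b s) x) (gam m μ a' (b t) x + gam m μ (a t) b' x) t := by
  have hN : ∀ y, μ x y ≠ 0 → y ∈ (hlf x).toFinset := fun y => (hlf x).mem_toFinset.2
  simp only [gam_eq_sum hN, ← mul_add, ← sum_add_distrib]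
  refine HasDerivAt.const_mul _ (HasDerivAt.fun_sum fun y _ => ?_)
  convert (((ha y).fun_sub (ha x)).fun_mul ((hb y).fun_sub (hb x))).const_mul (μ x y) using 1

theorem continuous_gam_self (hlf : ∀ x, (support (μ x)).Finite) {u : ℝ → V → ℝ}
    (hu : ∀ y, Differentiable ℝ fun s => u s y) (x : V) :
    Continuous fun s => gam m μ (u s) (u s) x :=
  continuous_iff_continuousAt.2 fun s =>
    (hasDerivAt_gam hlf (fun y => (hu y s).hasDerivAt) (fun y => (hu y s).hasDerivAt)
      x).continuousAt

theorem gam_le_gam_add_integral (hmx : 0 ≤ m x) (hnn : ∀ x y, 0 ≤ μ x y)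
    (hlf : ∀ x, (support (μ x)).Finite) {u v : ℝ → V → ℝ}
    (hu : ∀ y t, HasDerivAt (fun s => u s y) (v t y) t)
    (hv : ∀ y, Differentiable ℝ fun s => v s y) {t T : ℝ} (ht : t ∈ Set.Icc 0 T) :
    gam m μ (u t) (u t) x ≤ gam m μ (u 0) (u 0) x +
      ∫ s in 0..T, (gam m μ (u s) (u s) x + gam m μ (v s) (v s) x) := by
  have hderiv : ∀ s, HasDerivAt (fun s => gam m μ (u s) (u s) x)
      (gam m μ (v s) (u s) x + gam m μ (u s) (v s) x) s := fun s =>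
    hasDerivAt_gam hlf (fun y => hu y s) (fun y => hu y s) x
  have hcont : Continuous fun s => gam m μ (u s) (u s) x + gam m μ (v s) (v s) x :=
    (continuous_gam_self hlf (fun y t => (hu y t).differentiableAt) x).add
      (continuous_gam_self hlf hv x)
  have hle : gam m μ (u t) (u t) x - gam m μ (u 0) (u 0) x ≤
      ∫ s in 0..t, (gam m μ (u s) (u s) x + gam m μ (v s) (v s) x) :=
    intervalIntegral.sub_le_integral_of_hasDeriv_right_of_le ht.1
      (continuous_iff_continuousAt.2 fun s => (hderiv s).continuousAt).continuousOn
      (fun s _ => (hderiv s).hasDerivWithinAt) hcont.integrableOn_Icc fun s _ => by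
        rw [gam_comm, ← two_mul]
        exact two_mul_gam_le hmx hnn hlf _ _
  have hmono := intervalIntegral.integral_mono_interval le_rfl ht.1 ht.2
    (MeasureTheory.ae_of_all _ fun s => add_nonneg (gam_self_nonneg hmx hnn (u s))
      (gam_self_nonneg hmx hnn (v s)))
    (hcont.intervalIntegrable (μ := MeasureTheory.volume) 0 T)
  linarith

theorem summable_iSup_gam_mul_and_tsum_le (hm : ∀ x, 0 < m x) (hnn : ∀ x y, 0 ≤ μ x y)
    (hlf : ∀ x, (support (μ x)).Finite) {u v : ℝ → V → ℝ}
    (hu : ∀ y t, HasDerivAt (fun s => u s y) (v t y) t)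
    (hv : ∀ y, Differentiable ℝ fun s => v s y) {T K : ℝ} (hT : 0 ≤ T)
    (hus : ∀ s ∈ Set.Icc 0 T, Summable fun x => gam m μ (u s) (u s) x * m x)
    (hvs : ∀ s ∈ Set.Icc 0 T, Summable fun x => gam m μ (v s) (v s) x * m x)
    (hK : ∀ s ∈ Set.Icc 0 T,
      ∑' x, gam m μ (u s) (u s) x * m x + ∑' x, gam m μ (v s) (v s) x * m x ≤ K) :
    Summable (fun x => (⨆ t : Set.Icc 0 T, gam m μ (u t) (u t) x) * m x) ∧
      ∑' x, (⨆ t : Set.Icc 0 T, gam m μ (u t) (u t) x) * m x ≤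
        ∑' x, gam m μ (u 0) (u 0) x * m x + T * K := by
  have : Nonempty (Set.Icc 0 T) := ⟨⟨0, le_rfl, hT⟩⟩
  have hΓ : ∀ x (w : V → ℝ), 0 ≤ gam m μ w w x * m x := fun x => gam_self_mul_nonneg (hm x).le hnn
  have hψ : ∀ x, Continuous fun s => (gam m μ (u s) (u s) x + gam m μ (v s) (v s) x) * m x :=
    fun x => ((continuous_gam_self hlf (fun y t => (hu y t).differentiableAt) x).add
      (continuous_gam_self hlf hv x)).mul_const _
  refine summable_of_le_add (fun x => mul_nonneg (Real.iSup_nonneg fun t =>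
      gam_self_nonneg (hm x).le hnn _) (hm x).le)
    (fun x => intervalIntegral.integral_nonneg hT fun s _ => mul_nonneg
      (add_nonneg (gam_self_nonneg (hm x).le hnn _) (gam_self_nonneg (hm x).le hnn _)) (hm x).le)
    (fun x => ?_) (hus 0 ⟨le_rfl, hT⟩) fun F => sum_intervalIntegral_le hT hψ fun s hs => ?_
  · rw [intervalIntegral.integral_mul_const, ← add_mul]
    exact mul_le_mul_of_nonneg_right
      (ciSup_le fun t => gam_le_gam_add_integral (hm x).le hnn hlf hu hv t.2) (hm x).le
  · simp only [add_mul, sum_add_distrib]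
    exact (add_le_add ((hus s hs).sum_le_tsum F fun x _ => hΓ x _)
      ((hvs s hs).sum_le_tsum F fun x _ => hΓ x _)).trans (hK s hs)

end WeightedGraph

open WeightedGraph

theorem stmt9 {V : Type*} (m : V → ℝ) (μ : V → V → ℝ)
    (hm : ∀ x, 0 < m x) (hsym : ∀ x y, μ x y = μ y x)
    (hnn : ∀ x y, 0 ≤ μ x y) (hlf : ∀ x, (Function.support (μ x)).Finite)
    -- completeness of the graph: cut-off functions `η_k`
    (η : ℕ → V → ℝ)
    (hηfin : ∀ k, (Function.support (η k)).Finite)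
    (hηmono : ∀ k x, η k x ≤ η (k + 1) x)
    (hηlim : ∀ x, Tendsto (fun k => η k x) atTop (nhds 1))
    (hηgam : ∀ k x, 1 ≤ k → gam m μ (η k) (η k) x ≤ 1 / (k : ℝ))
    -- the heat semigroup `P t = e^{tΔ}` and its standard properties
    (P : ℝ → (V → ℝ) → V → ℝ)
    (hP0 : ∀ f, P 0 f = f)
    (hheat : ∀ (f : V → ℝ) (x : V) (t : ℝ), HasDerivAt (fun s => P s f x) (lap m μ (P t f) x) t)
    (hPcomm : ∀ f : V → ℝ, (Function.support f).Finite → ∀ t, P t (lap m μ f) = lap m μ (P t f))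
    (hPl2 : ∀ f : V → ℝ, Summable (fun x => f x ^ 2 * m x) → ∀ t, 0 ≤ t →
      Summable (fun x => (P t f x) ^ 2 * m x) ∧ ∑' x, (P t f x) ^ 2 * m x ≤ ∑' x, f x ^ 2 * m x)
    -- `C` is the universal constant from the energy estimate
    (C : ℝ)
    (hCenergy : ∀ f : V → ℝ, (Function.support f).Finite → ∀ t, 0 ≤ t →
      QN μ (P t f) ≤ C * l2n m f * l2n m (lap m μ f)) :
    ∀ f : V → ℝ, (Function.support f).Finite → ∀ T : ℝ, 0 < T →
      Summable (fun x => (⨆ t : Set.Icc (0 : ℝ) T, gam m μ (P t f) (P t f) x) * m x) ∧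
      ∑' x, (⨆ t : Set.Icc (0 : ℝ) T, gam m μ (P t f) (P t f) x) * m x ≤
        (∑' x, gam m μ f f x * m x) +
          C * T * l2n m (lap m μ f) * (l2n m f + l2n m (lap m μ (lap m μ f))) := by
  intro f hf T hT
  have hΔf := support_lap_finite (m := m) hsym hlf hf
  have henergy : ∀ g : V → ℝ, (Function.support g).Finite → ∀ s, 0 ≤ s →
      Summable (fun x => gam m μ (P s g) (P s g) x * m x) ∧
        ∑' x, gam m μ (P s g) (P s g) x * m x ≤ C * l2n m g * l2n m (lap m μ g) := by
    intro g hg s hs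
    have hΔ : Summable fun x => lap m μ (P s g) x ^ 2 * m x := by
      rw [← hPcomm g hg s]
      exact (hPl2 _ (summable_sq_mul (support_lap_finite hsym hlf hg)) s hs).1
    have hsum := summable_gam_mul hm hsym hnn hlf hηfin hηmono hηlim hηgam
      (hPl2 g (summable_sq_mul hg) s hs).1 hΔ
    exact ⟨hsum, (tsum_gam_mul_eq_QN hm hnn hlf hsum).trans_le (hCenergy g hg s hs)⟩
  have hu : ∀ y t, HasDerivAt (fun s => P s f y) (P t (lap m μ f) y) t := fun y t => by
    rw [hPcomm f hf t]
    exact hheat f y t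
  have hv : ∀ y, Differentiable ℝ fun s => P s (lap m μ f) y := fun y t =>
    (hheat _ y t).differentiableAt
  obtain ⟨hsum, hle⟩ := summable_iSup_gam_mul_and_tsum_le hm hnn hlf hu hv hT.le
    (fun s hs => (henergy f hf s hs.1).1) (fun s hs => (henergy _ hΔf s hs.1).1)
    (fun s hs => add_le_add (henergy f hf s hs.1).2 (henergy _ hΔf s hs.1).2)
  rw [hP0] at hle
  exact ⟨hsum, hle.trans_eq (by ring)⟩
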